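/- arXiv:1302.6050 — 3 statements merged into one kernel-verified Lean document; each statement's English description precedes it below -/
import Mathlib

section
/- Reinforced Kolmogorov continuity criterion: Let (Ω,𝓕,ℙ) be a probability space, d ≥ 1, R > 0, and let (f_n)_{n∈ℕ} be a sequence of real-valued stochastic processes indexed by the closed ball B(0,R) ⊆ ℝ^d (i.e. for each n and each x ∈ B(0,R), ω ↦ f_n(x,ω) is measurable). Suppose there exist constants q > 0, β > 0 and C > 0 such that for all x,y ∈ B(0,R): E[ sup_n |f_n(x) − f_n(y)|^q ] ≤ C·|x−y|^{d+β}. Then for every α ∈ (0, β/q) there exist, for each n, a modification g_n of f_n (meaning that for every n and every x ∈ B(0,R), ℙ(g_n(x) = f_n(x)) = 1) and a nonnegative random variable C̃ which is ℙ-almost surely finite, such that ℙ-almost surely, for all n ∈ ℕ and all x,y ∈ B(0,R): |g_n(x) − g_n(y)| ≤ C̃·|x−y|^α. -/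
/-!
Kolmogorov's chaining argument, run for all `n` at once. Approximate `x` by the dyadic point
`π_k x ∈ 2^{-k} ℤ^d` (`dyadicApprox k x`); truncating coordinates toward zero keeps it in the
ball. At level `k` there are `O(2^{kd})` pairs of neighbouring dyadic points (`dyadicPairs`), each
at distance `O(2^{-k})`, so the expected supremum `Y_k` (`levelSup`), over `n` and over these pairs
`(u, v)`, of `|f n u - f n v|^q` is `O(2^{-kβ})`. Hence `Z = ∑_k 2^{kαq} Y_k`
(`chainingVariable`) is integrable because `αq < β`, and where `Z` is finite every neighbour
increment at level `k` is at most `Z^{1/q} 2^{-kα}`. There `f n (π_k x)` converges geometrically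
fast to some `g n x`, and comparing `x` and `y` at the level `m` with `‖x - y‖ ≈ 2^{-m}` shows
that `g n` is `α`-Hölder with constant a multiple of `Z^{1/q}`. Finally `g n x = f n x` almost
surely, since `∑_k E |f n (π_k x) - f n x|^q < ∞`.
-/

open MeasureTheory Metric Set Filter Topology
open scoped ENNReal

noncomputable section

namespace Kolmogorov

section Probability

variable {Ω : Type*} [MeasurableSpace Ω] {μ : Measure Ω}

theorem ae_tsum_ne_top {X : ℕ → Ω → ℝ≥0∞} (hX : ∀ k, AEMeasurable (X k) μ)
    (h : ∑' k, ∫⁻ ω, X k ω ∂μ ≠ ∞) : ∀ᵐ ω ∂μ, ∑' k, X k ω ≠ ∞ :=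
  (ae_lt_top' (AEMeasurable.tsum hX) (by rwa [lintegral_tsum hX])).mono fun _ => ne_of_lt

theorem ae_tendsto_of_tsum_lintegral_ne_top {X : ℕ → Ω → ℝ} {Y : Ω → ℝ} {q : ℝ} (hq : 0 < q)
    (hX : ∀ k, Measurable (X k)) (hY : Measurable Y)
    (h : ∑' k, ∫⁻ ω, ENNReal.ofReal (|X k ω - Y ω| ^ q) ∂μ ≠ ∞) :
    ∀ᵐ ω ∂μ, Tendsto (fun k => X k ω) atTop (𝓝 (Y ω)) := by
  have hmeas k : AEMeasurable (fun ω => ENNReal.ofReal (|X k ω - Y ω| ^ q)) μ :=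
    (((hX k).sub hY).abs.pow_const q).ennreal_ofReal.aemeasurable
  filter_upwards [ae_tsum_ne_top hmeas h] with ω hω
  have hpow : Tendsto (fun k => |X k ω - Y ω| ^ q) atTop (𝓝 0) := by
    have := (ENNReal.tendsto_toReal ENNReal.zero_ne_top).comp
      (ENNReal.tendsto_atTop_zero_of_tsum_ne_top hω)
    simpa [Function.comp_def, ENNReal.toReal_ofReal, Real.rpow_nonneg] using this
  have habs : Tendsto (fun k => |X k ω - Y ω|) atTop (𝓝 0) := by
    have := hpow.rpow_const (p := q⁻¹) (Or.inr (inv_nonneg.2 hq.le))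
    simpa [← Real.rpow_mul (abs_nonneg _), mul_inv_cancel₀ hq.ne', Real.zero_rpow
      (inv_ne_zero hq.ne')] using this
  simpa [tendsto_iff_norm_sub_tendsto_zero, Real.norm_eq_abs] using habs

theorem tsum_ofReal_mul_pow_ne_top {A r : ℝ} (hr₀ : 0 ≤ r) (hr₁ : r < 1) :
    ∑' k : ℕ, ENNReal.ofReal (A * r ^ k) ≠ ∞ := by
  simp_rw [ENNReal.ofReal_mul' (pow_nonneg hr₀ _), ENNReal.ofReal_pow hr₀, ENNReal.tsum_mul_left,
    ENNReal.tsum_geometric]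
  exact ENNReal.mul_ne_top ENNReal.ofReal_ne_top
    (ENNReal.inv_ne_top.2 (tsub_pos_of_lt (ENNReal.ofReal_lt_one.2 hr₁)).ne')

end Probability

section Chaining

theorem div_two_pow_rpow {a : ℝ} (ha : 0 ≤ a) (s : ℝ) (k : ℕ) :
    (a / 2 ^ k) ^ s = a ^ s * ((2 : ℝ) ^ s)⁻¹ ^ k := by
  rw [Real.div_rpow ha (by positivity), ← Real.rpow_pow_comm zero_le_two, inv_pow,
    div_eq_mul_inv]

theorem exists_dyadic_scale {α L t : ℝ} (hα : 0 < α) (ht : 0 < t) (htL : t ≤ L) :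
    ∃ m : ℕ, t ≤ L / 2 ^ m ∧ ((2 : ℝ) ^ α)⁻¹ ^ m ≤ (2 / L) ^ α * t ^ α := by
  obtain ⟨m, hm, hm'⟩ := exists_nat_pow_near ((one_le_div ht).2 htL) one_lt_two
  have hL : 0 < L := ht.trans_le htL
  refine ⟨m, ?_, ?_⟩
  · rw [le_div_iff₀ ht] at hm
    rw [le_div_iff₀ (by positivity)]
    linarith
  · have hscale : ((2 : ℝ) ^ m)⁻¹ ≤ 2 / L * t := by
      rw [div_lt_iff₀ ht, pow_succ] at hm'
      rw [inv_le_iff_one_le_mul₀ (by positivity), div_mul_eq_mul_div, div_mul_eq_mul_div,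
        one_le_div hL]
      linarith
    calc ((2 : ℝ) ^ α)⁻¹ ^ m = (((2 : ℝ) ^ m)⁻¹) ^ α := by
          rw [inv_pow, Real.rpow_pow_comm zero_le_two, Real.inv_rpow (by positivity)]
      _ ≤ (2 / L * t) ^ α := by gcongr
      _ = (2 / L) ^ α * t ^ α := Real.mul_rpow (by positivity) ht.le

theorem tendsto_limUnder_of_dist_le_geometric {X : Type*} [MetricSpace X] [CompleteSpace X]
    [Nonempty X] {u : ℕ → X} {c r : ℝ} (hr : r < 1)
    (hu : ∀ k, dist (u k) (u (k + 1)) ≤ c * r ^ k) : Tendsto u atTop (𝓝 (limUnder atTop u)) :=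
  tendsto_nhds_limUnder (cauchySeq_tendsto_of_complete (cauchySeq_of_le_geometric r c hr hu))

theorem dist_le_mul_rpow_of_dyadic_chain {T : Type*} [MetricSpace T] {B : Set T}
    {π : ℕ → T → T} {F G : T → ℝ} {c α L : ℝ} (hc : 0 ≤ c) (hα : 0 < α)
    (hB : ∀ x ∈ B, ∀ y ∈ B, dist x y ≤ L)
    (hinc : ∀ x ∈ B, ∀ k : ℕ,
      dist (F (π k x)) (F (π (k + 1) x)) ≤ c * ((2 : ℝ) ^ α)⁻¹ ^ (k + 1))
    (hcross : ∀ x ∈ B, ∀ y ∈ B, ∀ m : ℕ, dist x y ≤ L / 2 ^ m →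
      dist (F (π m x)) (F (π m y)) ≤ c * ((2 : ℝ) ^ α)⁻¹ ^ m)
    (hG : ∀ x ∈ B, Tendsto (fun k => F (π k x)) atTop (𝓝 (G x))) {x y : T} (hx : x ∈ B)
    (hy : y ∈ B) :
    dist (G x) (G y) ≤
      c * ((1 + ((2 : ℝ) ^ α)⁻¹) / (1 - ((2 : ℝ) ^ α)⁻¹) * (2 / L) ^ α) * dist x y ^ α := by
  set ρ := ((2 : ℝ) ^ α)⁻¹
  have hρ1 : ρ < 1 := inv_lt_one_of_one_lt₀ (Real.one_lt_rpow one_lt_two hα)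
  have hρ0 : 0 < 1 - ρ := sub_pos.2 hρ1
  have happrox : ∀ z ∈ B, ∀ m : ℕ, dist (F (π m z)) (G z) ≤ c * ρ / (1 - ρ) * ρ ^ m :=
    fun z hz m => (dist_le_of_le_geometric_of_tendsto ρ (c * ρ) hρ1
      (fun k => (hinc z hz k).trans_eq (by ring)) (hG z hz) m).trans_eq (by ring)
  rcases eq_or_ne x y with rfl | hxy
  · simp [Real.zero_rpow hα.ne']
  obtain ⟨m, hm, hmρ⟩ := exists_dyadic_scale hα (dist_pos.2 hxy) (hB x hx y hy)
  calc dist (G x) (G y)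
      ≤ dist (F (π m x)) (G x) + dist (F (π m x)) (F (π m y)) + dist (F (π m y)) (G y) := by
        simpa only [dist_comm (G x)] using dist_triangle4 (G x) (F (π m x)) (F (π m y)) (G y)
    _ ≤ c * ρ / (1 - ρ) * ρ ^ m + c * ρ ^ m + c * ρ / (1 - ρ) * ρ ^ m :=
        add_le_add (add_le_add (happrox x hx m) (hcross x hx y hy m hm)) (happrox y hy m)
    _ = c * ((1 + ρ) / (1 - ρ)) * ρ ^ m := by field_simp; ring
    _ ≤ c * ((1 + ρ) / (1 - ρ)) * ((2 / L) ^ α * dist x y ^ α) := by gcongr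
    _ = c * ((1 + ρ) / (1 - ρ) * (2 / L) ^ α) * dist x y ^ α := by ring

end Chaining

section DyadicGrid

def truncToZero (s : ℝ) : ℤ := if 0 ≤ s then ⌊s⌋ else ⌈s⌉

theorem abs_truncToZero_le (s : ℝ) : |(truncToZero s : ℝ)| ≤ |s| := by
  unfold truncToZero
  split_ifs with h
  · rw [abs_of_nonneg h, abs_of_nonneg (by exact_mod_cast Int.floor_nonneg.2 h)]
    exact Int.floor_le s
  · push Not at h
    rw [abs_of_neg h, abs_of_nonpos (by exact_mod_cast Int.ceil_le.2 (by simpa using h.le))]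
    linarith [Int.le_ceil s]

theorem abs_sub_truncToZero_le (s : ℝ) : |s - truncToZero s| ≤ 1 := by
  unfold truncToZero
  split_ifs
  · rw [abs_le]; constructor <;> linarith [Int.sub_one_lt_floor s, Int.floor_le s]
  · rw [abs_le]; constructor <;> linarith [Int.ceil_lt_add_one s, Int.le_ceil s]

theorem norm_le_norm_of_abs_apply_le {ι : Type*} [Fintype ι] {x y : EuclideanSpace ℝ ι}
    (h : ∀ i, |x i| ≤ |y i|) : ‖x‖ ≤ ‖y‖ := by
  simp only [EuclideanSpace.norm_eq, Real.norm_eq_abs]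
  exact Real.sqrt_le_sqrt (Finset.sum_le_sum fun i _ => pow_le_pow_left₀ (abs_nonneg _) (h i) 2)

theorem norm_le_sqrt_card_mul {ι : Type*} [Fintype ι] (x : EuclideanSpace ℝ ι) {c : ℝ}
    (hc : 0 ≤ c) (h : ∀ i, |x i| ≤ c) : ‖x‖ ≤ √(Fintype.card ι) * c := by
  calc ‖x‖ = √(∑ i, |x i| ^ 2) := by simp only [EuclideanSpace.norm_eq, Real.norm_eq_abs]
    _ ≤ √(∑ _i : ι, c ^ 2) := by gcongr with i; exact h i
    _ = √(Fintype.card ι) * c := by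
      rw [Finset.sum_const, Finset.card_univ, nsmul_eq_mul, Real.sqrt_mul (Nat.cast_nonneg _),
        Real.sqrt_sq hc]

variable {d : ℕ}

def dyadicPoint (k : ℕ) (j : Fin d → ℤ) : EuclideanSpace ℝ (Fin d) :=
  WithLp.toLp 2 fun i => (j i : ℝ) / 2 ^ k

@[simp]
theorem dyadicPoint_apply (k : ℕ) (j : Fin d → ℤ) (i : Fin d) :
    dyadicPoint k j i = (j i : ℝ) / 2 ^ k :=
  rfl

theorem dyadicPoint_add (k : ℕ) (j o : Fin d → ℤ) :
    dyadicPoint k (j + o) = dyadicPoint k j + dyadicPoint k o := by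
  ext i
  simp [add_div]

theorem dyadicPoint_succ_two_mul (k : ℕ) (j : Fin d → ℤ) :
    dyadicPoint (k + 1) (fun i => 2 * j i) = dyadicPoint k j := by
  ext i
  simp only [dyadicPoint_apply, Int.cast_mul, Int.cast_ofNat, pow_succ]
  field_simp

def dyadicIndex (k : ℕ) (x : EuclideanSpace ℝ (Fin d)) : Fin d → ℤ :=
  fun i => truncToZero (2 ^ k * x i)

def dyadicApprox (k : ℕ) (x : EuclideanSpace ℝ (Fin d)) : EuclideanSpace ℝ (Fin d) :=
  dyadicPoint k (dyadicIndex k x)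

theorem abs_sub_dyadicIndex_le (k : ℕ) (x : EuclideanSpace ℝ (Fin d)) (i : Fin d) :
    |2 ^ k * x i - dyadicIndex k x i| ≤ 1 :=
  abs_sub_truncToZero_le _

theorem abs_dyadicIndex_le (k : ℕ) (x : EuclideanSpace ℝ (Fin d)) (i : Fin d) :
    |(dyadicIndex k x i : ℝ)| ≤ 2 ^ k * |x i| :=
  (abs_truncToZero_le _).trans_eq (by rw [abs_mul, abs_of_pos (by positivity)])

theorem norm_dyadicApprox_le (k : ℕ) (x : EuclideanSpace ℝ (Fin d)) :
    ‖dyadicApprox k x‖ ≤ ‖x‖ := by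
  refine norm_le_norm_of_abs_apply_le fun i => ?_
  rw [dyadicApprox, dyadicPoint_apply, abs_div, abs_of_pos (by positivity : (0 : ℝ) < 2 ^ k),
    div_le_iff₀ (by positivity), mul_comm]
  exact abs_dyadicIndex_le k x i

theorem dyadicApprox_mem_closedBall {R : ℝ} (k : ℕ) {x : EuclideanSpace ℝ (Fin d)}
    (hx : x ∈ closedBall 0 R) : dyadicApprox k x ∈ closedBall 0 R := by
  rw [mem_closedBall_zero_iff] at *
  exact (norm_dyadicApprox_le k x).trans hx

theorem norm_sub_dyadicApprox_le (k : ℕ) (x : EuclideanSpace ℝ (Fin d)) :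
    ‖x - dyadicApprox k x‖ ≤ √d / 2 ^ k := by
  calc ‖x - dyadicApprox k x‖ ≤ √(Fintype.card (Fin d)) * (1 / 2 ^ k) :=
        norm_le_sqrt_card_mul _ (by positivity) fun i => ?_
    _ = √d / 2 ^ k := by rw [Fintype.card_fin, mul_one_div]
  rw [PiLp.sub_apply, dyadicApprox, dyadicPoint_apply, le_div_iff₀ (by positivity)]
  calc |x i - dyadicIndex k x i / 2 ^ k| * 2 ^ k = |2 ^ k * x i - dyadicIndex k x i| := by
        rw [← abs_of_pos (by positivity : (0 : ℝ) < 2 ^ k), ← abs_mul, abs_pow, abs_two]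
        congr 1
        field_simp
    _ ≤ 1 := abs_sub_dyadicIndex_le k x i

def intCube (d a : ℕ) : Finset (Fin d → ℤ) :=
  Fintype.piFinset fun _ => Finset.Icc (-(a : ℤ)) a

theorem mem_intCube_of_abs_le {a : ℕ} {j : Fin d → ℤ} (h : ∀ i, |(j i : ℝ)| ≤ a) :
    j ∈ intCube d a := by
  refine Fintype.mem_piFinset.2 fun i => Finset.mem_Icc.2 (abs_le.1 ?_)
  exact_mod_cast h i

theorem abs_le_of_mem_intCube {a : ℕ} {j : Fin d → ℤ} (hj : j ∈ intCube d a) (i : Fin d) :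
    |(j i : ℝ)| ≤ a := by
  have := abs_le.2 (Finset.mem_Icc.1 (Fintype.mem_piFinset.1 hj i))
  exact_mod_cast this

theorem card_intCube (d a : ℕ) : (intCube d a).card = (2 * a + 1) ^ d := by
  simp only [intCube, Fintype.card_piFinset, Int.card_Icc, Finset.prod_const, Finset.card_univ,
    Fintype.card_fin]
  congr 1
  omega

theorem dyadicIndex_mem_intCube {R : ℝ} (k : ℕ) {x : EuclideanSpace ℝ (Fin d)}
    (hx : x ∈ closedBall 0 R) : dyadicIndex k x ∈ intCube d ⌈2 ^ k * R⌉₊ := by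
  refine mem_intCube_of_abs_le fun i => ?_
  calc |(dyadicIndex k x i : ℝ)| ≤ 2 ^ k * |x i| := abs_dyadicIndex_le k x i
    _ ≤ 2 ^ k * R := by
      gcongr
      exact (PiLp.norm_apply_le x i).trans (mem_closedBall_zero_iff.1 hx)
    _ ≤ ⌈2 ^ k * R⌉₊ := Nat.le_ceil _

open scoped Classical in
def dyadicPairs (R : ℝ) (N k : ℕ) :
    Finset (EuclideanSpace ℝ (Fin d) × EuclideanSpace ℝ (Fin d)) :=
  ((intCube d ⌈2 ^ k * R⌉₊ ×ˢ intCube d N).image fun p =>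
    (dyadicPoint k p.1, dyadicPoint k (p.1 + p.2))).filter fun p =>
      p.1 ∈ closedBall 0 R ∧ p.2 ∈ closedBall 0 R

variable {R : ℝ} {N k : ℕ}

open scoped Classical in
theorem mem_closedBall_of_mem_dyadicPairs
    {p : EuclideanSpace ℝ (Fin d) × EuclideanSpace ℝ (Fin d)} (hp : p ∈ dyadicPairs R N k) :
    p.1 ∈ closedBall 0 R ∧ p.2 ∈ closedBall 0 R :=
  (Finset.mem_filter.1 hp).2

open scoped Classical in
theorem norm_sub_le_of_mem_dyadicPairs
    {p : EuclideanSpace ℝ (Fin d) × EuclideanSpace ℝ (Fin d)} (hp : p ∈ dyadicPairs R N k) :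
    ‖p.1 - p.2‖ ≤ √d * N / 2 ^ k := by
  obtain ⟨⟨j, o⟩, hjo, rfl⟩ := Finset.mem_image.1 (Finset.mem_filter.1 hp).1
  rw [dyadicPoint_add, sub_add_cancel_left, norm_neg, mul_div_assoc]
  calc ‖dyadicPoint k o‖ ≤ √(Fintype.card (Fin d)) * (N / 2 ^ k) :=
        norm_le_sqrt_card_mul _ (by positivity) fun i => ?_
    _ = √d * (N / 2 ^ k) := by rw [Fintype.card_fin]
  rw [dyadicPoint_apply, abs_div, abs_of_pos (by positivity : (0 : ℝ) < 2 ^ k)]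
  gcongr
  exact abs_le_of_mem_intCube (Finset.mem_product.1 hjo).2 i

open scoped Classical in
theorem card_dyadicPairs_le (hR : 0 ≤ R) :
    ((dyadicPairs (d := d) R N k).card : ℝ) ≤ (2 ^ k * (2 * R + 3)) ^ d * (2 * N + 1) ^ d := by
  have hcard :
      (dyadicPairs (d := d) R N k).card ≤ (2 * ⌈2 ^ k * R⌉₊ + 1) ^ d * (2 * N + 1) ^ d :=
    calc _ ≤ _ := Finset.card_filter_le _ _
      _ ≤ _ := Finset.card_image_le
      _ = _ := by rw [Finset.card_product, card_intCube, card_intCube]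
  have hceil : 2 * (⌈2 ^ k * R⌉₊ : ℝ) + 1 ≤ 2 ^ k * (2 * R + 3) := by
    have h1 : (⌈2 ^ k * R⌉₊ : ℝ) < 2 ^ k * R + 1 := Nat.ceil_lt_add_one (by positivity)
    have h2 : (1 : ℝ) ≤ 2 ^ k := one_le_pow₀ one_le_two
    nlinarith
  calc ((dyadicPairs (d := d) R N k).card : ℝ)
      ≤ (2 * (⌈2 ^ k * R⌉₊ : ℝ) + 1) ^ d * (2 * N + 1) ^ d := by exact_mod_cast hcard
    _ ≤ _ := by gcongr

open scoped Classical in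
theorem mk_mem_dyadicPairs {j o : Fin d → ℤ} (hj : j ∈ intCube d ⌈2 ^ k * R⌉₊)
    (ho : o ∈ intCube d N) (h₁ : dyadicPoint k j ∈ closedBall 0 R)
    (h₂ : dyadicPoint k (j + o) ∈ closedBall 0 R) :
    (dyadicPoint k j, dyadicPoint k (j + o)) ∈ dyadicPairs R N k :=
  Finset.mem_filter.2 ⟨Finset.mem_image.2 ⟨(j, o), Finset.mem_product.2 ⟨hj, ho⟩, rfl⟩, h₁, h₂⟩

/-- At level `k + 1` the integer coordinates of `dyadicApprox k x` and `dyadicApprox (k + 1) x`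
differ by at most `3`. -/
theorem dyadicApprox_succ_mem_dyadicPairs (hN : 3 ≤ N) {x : EuclideanSpace ℝ (Fin d)}
    (hx : x ∈ closedBall 0 R) :
    (dyadicApprox (k + 1) x, dyadicApprox k x) ∈ dyadicPairs R N (k + 1) := by
  set o : Fin d → ℤ := fun i => 2 * dyadicIndex k x i - dyadicIndex (k + 1) x i
  have hpt : dyadicApprox k x = dyadicPoint (k + 1) (dyadicIndex (k + 1) x + o) := by
    rw [dyadicApprox, ← dyadicPoint_succ_two_mul]
    congr 1
    ext i
    simp [o]
  rw [hpt]
  refine mk_mem_dyadicPairs (dyadicIndex_mem_intCube _ hx) (mem_intCube_of_abs_le fun i => ?_)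
    (dyadicApprox_mem_closedBall _ hx) (hpt ▸ dyadicApprox_mem_closedBall _ hx)
  have h₁ := abs_le.1 (abs_sub_dyadicIndex_le k x i)
  have h₂ := abs_le.1 (abs_sub_dyadicIndex_le (k + 1) x i)
  rw [pow_succ] at h₂
  have hN' : (3 : ℝ) ≤ N := by exact_mod_cast hN
  simp only [o]
  push_cast
  rw [abs_le]
  constructor <;> linarith

theorem dyadicApprox_mem_dyadicPairs (hN : 2 * R + 2 ≤ N) {m : ℕ}
    {x y : EuclideanSpace ℝ (Fin d)} (hx : x ∈ closedBall 0 R) (hy : y ∈ closedBall 0 R)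
    (hxy : ‖x - y‖ ≤ 2 * R / 2 ^ m) :
    (dyadicApprox m x, dyadicApprox m y) ∈ dyadicPairs R N m := by
  have hpt : dyadicApprox m y =
      dyadicPoint m (dyadicIndex m x + (dyadicIndex m y - dyadicIndex m x)) := by
    rw [add_sub_cancel, dyadicApprox]
  rw [hpt]
  refine mk_mem_dyadicPairs (dyadicIndex_mem_intCube _ hx) (mem_intCube_of_abs_le fun i => ?_)
    (dyadicApprox_mem_closedBall _ hx) (hpt ▸ dyadicApprox_mem_closedBall _ hy)
  have h₁ := abs_le.1 (abs_sub_dyadicIndex_le m x i)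
  have h₂ := abs_le.1 (abs_sub_dyadicIndex_le m y i)
  have hxy' : |2 ^ m * (x i - y i)| ≤ 2 * R := by
    rw [abs_mul, abs_of_pos (by positivity), ← le_div_iff₀' (by positivity)]
    exact (PiLp.norm_apply_le (x - y) i).trans hxy
  have h₃ := abs_le.1 hxy'
  simp only [Pi.sub_apply, Int.cast_sub]
  rw [abs_le]
  constructor <;> linarith

end DyadicGrid

section Increments

variable {Ω : Type*} {d : ℕ} (f : ℕ → EuclideanSpace ℝ (Fin d) → Ω → ℝ) (q : ℝ)

def supIncrement (u v : EuclideanSpace ℝ (Fin d)) (ω : Ω) : ℝ≥0∞ :=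
  ⨆ n, ENNReal.ofReal (|f n u ω - f n v ω| ^ q)

def levelSup (R : ℝ) (N k : ℕ) (ω : Ω) : ℝ≥0∞ :=
  ⨆ p ∈ dyadicPairs R N k, supIncrement f q p.1 p.2 ω

def chainingVariable (α R : ℝ) (N : ℕ) (ω : Ω) : ℝ≥0∞ :=
  ∑' k : ℕ, ENNReal.ofReal ((((2 : ℝ) ^ α) ^ k) ^ q) * levelSup f q R N k ω

def dyadicLimit (n : ℕ) (x : EuclideanSpace ℝ (Fin d)) (ω : Ω) : ℝ :=
  limUnder atTop fun k => f n (dyadicApprox k x) ω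

def MomentBound [MeasurableSpace Ω] (μ : Measure Ω) (R β C : ℝ) : Prop :=
  ∀ x ∈ closedBall (0 : EuclideanSpace ℝ (Fin d)) R,
    ∀ y ∈ closedBall (0 : EuclideanSpace ℝ (Fin d)) R,
      ∫⁻ ω, supIncrement f q x y ω ∂μ ≤ ENNReal.ofReal (C * ‖x - y‖ ^ ((d : ℝ) + β))

variable {f q} {R : ℝ} {N : ℕ} {α : ℝ}

theorem abs_sub_le_of_mem_dyadicPairs (hq : 0 < q) {ω : Ω}
    (hZ : chainingVariable f q α R N ω ≠ ∞) {k : ℕ}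
    {p : EuclideanSpace ℝ (Fin d) × EuclideanSpace ℝ (Fin d)} (hp : p ∈ dyadicPairs R N k)
    (n : ℕ) :
    |f n p.1 ω - f n p.2 ω| ≤
      (chainingVariable f q α R N ω).toReal ^ q⁻¹ * ((2 : ℝ) ^ α)⁻¹ ^ k := by
  set Z := chainingVariable f q α R N ω
  set w := ((2 : ℝ) ^ α) ^ k
  have hw : 0 < w := by positivity
  have hle : ENNReal.ofReal (w ^ q * |f n p.1 ω - f n p.2 ω| ^ q) ≤ Z := by
    rw [ENNReal.ofReal_mul (by positivity)]
    calc _ ≤ ENNReal.ofReal (w ^ q) * levelSup f q R N k ω := by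
          gcongr
          exact (le_iSup (fun n => ENNReal.ofReal (|f n p.1 ω - f n p.2 ω| ^ q)) n).trans
            (le_iSup₂ (f := fun (p : EuclideanSpace ℝ (Fin d) × EuclideanSpace ℝ (Fin d)) _ =>
              supIncrement f q p.1 p.2 ω) p hp)
      _ ≤ Z := ENNReal.le_tsum
          (f := fun k => ENNReal.ofReal ((((2 : ℝ) ^ α) ^ k) ^ q) * levelSup f q R N k ω) k
  have hpow : (w * |f n p.1 ω - f n p.2 ω|) ^ q ≤ Z.toReal := by
    rw [Real.mul_rpow hw.le (abs_nonneg _)]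
    exact (ENNReal.ofReal_le_iff_le_toReal hZ).1 hle
  rw [inv_pow, ← div_eq_mul_inv, le_div_iff₀ hw, mul_comm]
  exact (Real.le_rpow_inv_iff_of_pos (by positivity) ENNReal.toReal_nonneg hq).2 hpow

theorem dist_dyadicApprox_succ_le (hq : 0 < q) (hN : 3 ≤ N) {ω : Ω}
    (hZ : chainingVariable f q α R N ω ≠ ∞) (n : ℕ) {x : EuclideanSpace ℝ (Fin d)}
    (hx : x ∈ closedBall 0 R) (k : ℕ) :
    dist (f n (dyadicApprox k x) ω) (f n (dyadicApprox (k + 1) x) ω) ≤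
      (chainingVariable f q α R N ω).toReal ^ q⁻¹ * ((2 : ℝ) ^ α)⁻¹ ^ (k + 1) := by
  rw [dist_comm, Real.dist_eq]
  exact abs_sub_le_of_mem_dyadicPairs hq hZ (dyadicApprox_succ_mem_dyadicPairs hN hx) n

theorem tendsto_dyadicLimit (hq : 0 < q) (hα : 0 < α) (hN : 3 ≤ N) {ω : Ω}
    (hZ : chainingVariable f q α R N ω ≠ ∞) (n : ℕ) {x : EuclideanSpace ℝ (Fin d)}
    (hx : x ∈ closedBall 0 R) :
    Tendsto (fun k => f n (dyadicApprox k x) ω) atTop (𝓝 (dyadicLimit f n x ω)) :=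
  tendsto_limUnder_of_dist_le_geometric
    (c := (chainingVariable f q α R N ω).toReal ^ q⁻¹ * ((2 : ℝ) ^ α)⁻¹)
    (inv_lt_one_of_one_lt₀ (Real.one_lt_rpow one_lt_two hα)) fun k =>
      (dist_dyadicApprox_succ_le hq hN hZ n hx k).trans_eq (by ring)

theorem exists_holder_dyadicLimit (hq : 0 < q) (hα : 0 < α) (hR : 0 ≤ R) (hN₃ : 3 ≤ N)
    (hN : 2 * R + 2 ≤ N) :
    ∃ K : ℝ, 0 ≤ K ∧ ∀ ω, chainingVariable f q α R N ω ≠ ∞ → ∀ n,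
      ∀ x ∈ closedBall (0 : EuclideanSpace ℝ (Fin d)) R, ∀ y ∈ closedBall 0 R,
        |dyadicLimit f n x ω - dyadicLimit f n y ω| ≤
          (chainingVariable f q α R N ω).toReal ^ q⁻¹ * K * ‖x - y‖ ^ α := by
  have hρ : ((2 : ℝ) ^ α)⁻¹ < 1 := inv_lt_one_of_one_lt₀ (Real.one_lt_rpow one_lt_two hα)
  refine ⟨(1 + ((2 : ℝ) ^ α)⁻¹) / (1 - ((2 : ℝ) ^ α)⁻¹) * (2 / (2 * R)) ^ α,
    mul_nonneg (div_nonneg (by positivity) (sub_pos.2 hρ).le)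
      (Real.rpow_nonneg (div_nonneg zero_le_two (by linarith)) _), fun ω hZ n x hx y hy => ?_⟩
  have hdiam : ∀ x ∈ closedBall (0 : EuclideanSpace ℝ (Fin d)) R, ∀ y ∈ closedBall 0 R,
      dist x y ≤ 2 * R := fun x hx y hy =>
    (dist_triangle_right x y 0).trans (by rw [mem_closedBall] at hx hy; linarith)
  have hcross : ∀ x ∈ closedBall (0 : EuclideanSpace ℝ (Fin d)) R, ∀ y ∈ closedBall 0 R,
      ∀ m : ℕ, dist x y ≤ 2 * R / 2 ^ m →
        dist (f n (dyadicApprox m x) ω) (f n (dyadicApprox m y) ω) ≤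
          (chainingVariable f q α R N ω).toReal ^ q⁻¹ * ((2 : ℝ) ^ α)⁻¹ ^ m :=
    fun x hx y hy m hm => by
      rw [Real.dist_eq]
      exact abs_sub_le_of_mem_dyadicPairs hq hZ
        (dyadicApprox_mem_dyadicPairs hN hx hy (by rwa [← dist_eq_norm])) n
  have hholder := dist_le_mul_rpow_of_dyadic_chain (F := fun u => f n u ω) (by positivity) hα
    hdiam (fun x hx k => dist_dyadicApprox_succ_le hq hN₃ hZ n hx k) hcross
    (fun x hx => tendsto_dyadicLimit hq hα hN₃ hZ n hx) hx hy
  rwa [Real.dist_eq, dist_eq_norm] at hholder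

variable [MeasurableSpace Ω] {β C : ℝ} {μ : Measure Ω}

theorem measurable_supIncrement
    (hmeas : ∀ n, ∀ x ∈ closedBall (0 : EuclideanSpace ℝ (Fin d)) R, Measurable (f n x))
    {u v : EuclideanSpace ℝ (Fin d)} (hu : u ∈ closedBall 0 R) (hv : v ∈ closedBall 0 R) :
    Measurable (supIncrement f q u v) :=
  .iSup fun n => (((hmeas n u hu).sub (hmeas n v hv)).abs.pow_const q).ennreal_ofReal

theorem measurable_levelSup
    (hmeas : ∀ n, ∀ x ∈ closedBall (0 : EuclideanSpace ℝ (Fin d)) R, Measurable (f n x))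
    (k : ℕ) : Measurable (levelSup f q R N k) :=
  .biSup _ (Finset.countable_toSet _) fun _p hp =>
    measurable_supIncrement hmeas (mem_closedBall_of_mem_dyadicPairs hp).1
      (mem_closedBall_of_mem_dyadicPairs hp).2

theorem measurable_chainingVariable
    (hmeas : ∀ n, ∀ x ∈ closedBall (0 : EuclideanSpace ℝ (Fin d)) R, Measurable (f n x)) :
    Measurable (chainingVariable f q α R N) :=
  .tsum fun k => (measurable_levelSup hmeas k).const_mul _

theorem lintegral_levelSup_le
    (hmeas : ∀ n, ∀ x ∈ closedBall (0 : EuclideanSpace ℝ (Fin d)) R, Measurable (f n x))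
    (hbound : MomentBound f q μ R β C) (hR : 0 ≤ R) (hβ : 0 ≤ β) (hC : 0 ≤ C) (k : ℕ) :
    ∫⁻ ω, levelSup f q R N k ω ∂μ ≤ ENNReal.ofReal ((2 * R + 3) ^ d * (2 * N + 1) ^ d * C *
      (√d * N) ^ ((d : ℝ) + β) * ((2 : ℝ) ^ β)⁻¹ ^ k) := by
  set P := dyadicPairs (d := d) R N k
  have hmem {p} (hp : p ∈ P) := mem_closedBall_of_mem_dyadicPairs hp
  calc ∫⁻ ω, levelSup f q R N k ω ∂μ
      ≤ ∫⁻ ω, ∑ p ∈ P, supIncrement f q p.1 p.2 ω ∂μ :=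
        lintegral_mono fun ω => iSup₂_le fun p hp =>
          Finset.single_le_sum
            (f := fun p : EuclideanSpace ℝ (Fin d) × EuclideanSpace ℝ (Fin d) =>
              supIncrement f q p.1 p.2 ω) (fun _ _ => zero_le) hp
    _ = ∑ p ∈ P, ∫⁻ ω, supIncrement f q p.1 p.2 ω ∂μ :=
        lintegral_finsetSum' _ fun p hp =>
          (measurable_supIncrement hmeas (hmem hp).1 (hmem hp).2).aemeasurable
    _ ≤ ∑ _p ∈ P, ENNReal.ofReal (C * (√d * N / 2 ^ k) ^ ((d : ℝ) + β)) :=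
        Finset.sum_le_sum fun p hp => (hbound _ (hmem hp).1 _ (hmem hp).2).trans <|
          ENNReal.ofReal_le_ofReal (by gcongr; exact norm_sub_le_of_mem_dyadicPairs hp)
    _ = ENNReal.ofReal (P.card * (C * (√d * N / 2 ^ k) ^ ((d : ℝ) + β))) := by
        rw [Finset.sum_const, nsmul_eq_mul, ENNReal.ofReal_mul (Nat.cast_nonneg _),
          ENNReal.ofReal_natCast]
    _ ≤ _ := by
        refine ENNReal.ofReal_le_ofReal ?_
        have hcard := card_dyadicPairs_le (d := d) (N := N) (k := k) hR
        have hpow :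
            ((2 : ℝ) ^ k) ^ d * ((2 : ℝ) ^ ((d : ℝ) + β))⁻¹ ^ k = ((2 : ℝ) ^ β)⁻¹ ^ k := by
          rw [Real.rpow_add two_pos, Real.rpow_natCast, mul_inv, mul_pow, ← mul_assoc, inv_pow,
            ← pow_mul, ← pow_mul, mul_comm k d, mul_inv_cancel₀ (by positivity), one_mul]
        calc (P.card : ℝ) * (C * (√d * N / 2 ^ k) ^ ((d : ℝ) + β))
            ≤ (2 ^ k * (2 * R + 3)) ^ d * (2 * N + 1) ^ d *
                (C * (√d * N / 2 ^ k) ^ ((d : ℝ) + β)) := by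
              gcongr
          _ = _ := by
              rw [div_two_pow_rpow (by positivity), mul_pow, ← hpow]
              ring

theorem lintegral_chainingVariable_ne_top
    (hmeas : ∀ n, ∀ x ∈ closedBall (0 : EuclideanSpace ℝ (Fin d)) R, Measurable (f n x))
    (hbound : MomentBound f q μ R β C) (hR : 0 ≤ R) (hβ : 0 ≤ β) (hC : 0 ≤ C)
    (hαq : α * q < β) : ∫⁻ ω, chainingVariable f q α R N ω ∂μ ≠ ∞ := by
  set A := (2 * R + 3) ^ d * (2 * N + 1) ^ d * C * (√d * N) ^ ((d : ℝ) + β)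
  have hr : ((2 : ℝ) ^ α) ^ q * ((2 : ℝ) ^ β)⁻¹ < 1 := by
    rw [← Real.rpow_mul zero_le_two, ← div_eq_mul_inv, div_lt_one (by positivity)]
    exact Real.rpow_lt_rpow_of_exponent_lt one_lt_two hαq
  refine ne_top_of_le_ne_top (tsum_ofReal_mul_pow_ne_top (A := A) (by positivity) hr) ?_
  unfold chainingVariable
  rw [lintegral_tsum fun k => ((measurable_levelSup hmeas k).const_mul _).aemeasurable]
  refine ENNReal.tsum_le_tsum fun k => ?_
  rw [lintegral_const_mul _ (measurable_levelSup hmeas k)]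
  calc _ ≤ ENNReal.ofReal ((((2 : ℝ) ^ α) ^ k) ^ q) *
        ENNReal.ofReal (A * ((2 : ℝ) ^ β)⁻¹ ^ k) := by
        gcongr
        exact lintegral_levelSup_le hmeas hbound hR hβ hC k
    _ = ENNReal.ofReal (A * (((2 : ℝ) ^ α) ^ q * ((2 : ℝ) ^ β)⁻¹) ^ k) := by
        rw [← ENNReal.ofReal_mul (by positivity), ← Real.rpow_pow_comm (by positivity), mul_pow]
        congr 1
        ring

theorem ae_tendsto_dyadicApprox
    (hmeas : ∀ n, ∀ x ∈ closedBall (0 : EuclideanSpace ℝ (Fin d)) R, Measurable (f n x))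
    (hbound : MomentBound f q μ R β C) (hq : 0 < q) (hβ : 0 < β) (hC : 0 ≤ C)
    {x : EuclideanSpace ℝ (Fin d)} (hx : x ∈ closedBall 0 R) (n : ℕ) :
    ∀ᵐ ω ∂μ, Tendsto (fun k => f n (dyadicApprox k x) ω) atTop (𝓝 (f n x ω)) := by
  have hs : 0 < (d : ℝ) + β := by positivity
  have hr : ((2 : ℝ) ^ ((d : ℝ) + β))⁻¹ < 1 :=
    inv_lt_one_of_one_lt₀ (Real.one_lt_rpow one_lt_two hs)
  refine ae_tendsto_of_tsum_lintegral_ne_top hq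
    (fun k => hmeas n _ (dyadicApprox_mem_closedBall k hx)) (hmeas n x hx) ?_
  refine ne_top_of_le_ne_top (tsum_ofReal_mul_pow_ne_top (A := C * √d ^ ((d : ℝ) + β))
    (by positivity) hr) (ENNReal.tsum_le_tsum fun k => ?_)
  calc ∫⁻ ω, ENNReal.ofReal (|f n (dyadicApprox k x) ω - f n x ω| ^ q) ∂μ
      ≤ ∫⁻ ω, supIncrement f q (dyadicApprox k x) x ω ∂μ :=
        lintegral_mono fun ω =>
          le_iSup (fun n => ENNReal.ofReal (|f n (dyadicApprox k x) ω - f n x ω| ^ q)) n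
    _ ≤ ENNReal.ofReal (C * ‖dyadicApprox k x - x‖ ^ ((d : ℝ) + β)) :=
        hbound _ (dyadicApprox_mem_closedBall k hx) _ hx
    _ ≤ ENNReal.ofReal (C * √d ^ ((d : ℝ) + β) * ((2 : ℝ) ^ ((d : ℝ) + β))⁻¹ ^ k) := by
        rw [mul_assoc, ← div_two_pow_rpow (by positivity), norm_sub_rev]
        gcongr
        exact norm_sub_dyadicApprox_le k x

end Increments

end Kolmogorov

end

open Kolmogorov

theorem reinforced_kolmogorov_continuity_general
    {Ω : Type*} [MeasurableSpace Ω] (ℙ : Measure Ω) [IsProbabilityMeasure ℙ]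
    (d : ℕ) (R : ℝ) (hR : 0 < R)
    (f : ℕ → EuclideanSpace ℝ (Fin d) → Ω → ℝ)
    (hmeas : ∀ n, ∀ x ∈ closedBall (0 : EuclideanSpace ℝ (Fin d)) R, Measurable (f n x))
    (q β C : ℝ) (hq : 0 < q) (hβ : 0 < β) (hC : 0 < C)
    (hbound : ∀ x ∈ closedBall (0 : EuclideanSpace ℝ (Fin d)) R,
      ∀ y ∈ closedBall (0 : EuclideanSpace ℝ (Fin d)) R,
        ∫⁻ ω, ⨆ n, ENNReal.ofReal (|f n x ω - f n y ω| ^ q) ∂ℙ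
          ≤ ENNReal.ofReal (C * ‖x - y‖ ^ ((d : ℝ) + β))) :
    ∀ α : ℝ, 0 < α → α < β / q →
      ∃ g : ℕ → EuclideanSpace ℝ (Fin d) → Ω → ℝ, ∃ C' : Ω → ℝ,
        (∀ n, ∀ x ∈ closedBall (0 : EuclideanSpace ℝ (Fin d)) R,
            ℙ {ω | g n x ω = f n x ω} = 1) ∧
        Measurable C' ∧ (∀ ω, 0 ≤ C' ω) ∧
        (∀ᵐ ω ∂ℙ, ∀ n, ∀ x ∈ closedBall (0 : EuclideanSpace ℝ (Fin d)) R,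
            ∀ y ∈ closedBall (0 : EuclideanSpace ℝ (Fin d)) R,
              |g n x ω - g n y ω| ≤ C' ω * ‖x - y‖ ^ α) := by
  intro α hα hαβ
  set N := ⌈2 * R⌉₊ + 3
  have hN : 2 * R + 2 ≤ N := by
    simp only [N, Nat.cast_add, Nat.cast_ofNat]
    linarith [Nat.le_ceil (2 * R)]
  set Z := chainingVariable f q α R N
  have hZ : ∀ᵐ ω ∂ℙ, Z ω ≠ ∞ :=
    (ae_lt_top (measurable_chainingVariable hmeas) (lintegral_chainingVariable_ne_top hmeas
      hbound hR.le hβ.le hC.le ((lt_div_iff₀ hq).1 hαβ))).mono fun _ => ne_of_lt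
  obtain ⟨K, hK, hholder⟩ := exists_holder_dyadicLimit (f := f) hq hα hR.le (by omega) hN
  refine ⟨dyadicLimit f, fun ω => (Z ω).toReal ^ q⁻¹ * K, fun n x hx => ?_,
    ((measurable_chainingVariable hmeas).ennreal_toReal.pow_const _).mul_const _,
    fun ω => mul_nonneg (by positivity) hK, ?_⟩
  · have hae : ∀ᵐ ω ∂ℙ, dyadicLimit f n x ω = f n x ω := by
      filter_upwards [hZ, ae_tendsto_dyadicApprox hmeas hbound hq hβ hC.le hx n] with ω hω hf
      exact tendsto_nhds_unique (tendsto_dyadicLimit hq hα (by omega) hω n hx) hf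
    exact (measure_congr (ae_eq_univ.2 (ae_iff.1 hae))).trans measure_univ
  · filter_upwards [hZ] with ω hω
    exact hholder ω hω

/-- **Reinforced Kolmogorov continuity criterion.**
Let `(Ω, 𝓕, ℙ)` be a probability space and `(f n)` a sequence of real-valued stochastic
processes indexed by the closed ball `B(0,R) ⊆ ℝ^d`. If for some `q, β, C > 0` one has
`E[sup_n |f n x - f n y|^q] ≤ C * |x - y|^(d + β)` for all `x, y` in the ball, then for
every `α ∈ (0, β/q)` there are modifications `g n` of the `f n` and a nonnegative
(a.s. finite) random variable `C'` such that, almost surely,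
`|g n x - g n y| ≤ C' * |x - y|^α` for all `n` and all `x, y` in the ball. -/
theorem reinforced_kolmogorov_continuity
    {Ω : Type*} [MeasurableSpace Ω] (ℙ : Measure Ω) [IsProbabilityMeasure ℙ]
    (d : ℕ) (hd : 1 ≤ d) (R : ℝ) (hR : 0 < R)
    (f : ℕ → EuclideanSpace ℝ (Fin d) → Ω → ℝ)
    (hmeas : ∀ n, ∀ x ∈ closedBall (0 : EuclideanSpace ℝ (Fin d)) R, Measurable (f n x))
    (q β C : ℝ) (hq : 0 < q) (hβ : 0 < β) (hC : 0 < C)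
    (hbound : ∀ x ∈ closedBall (0 : EuclideanSpace ℝ (Fin d)) R,
      ∀ y ∈ closedBall (0 : EuclideanSpace ℝ (Fin d)) R,
        ∫⁻ ω, ⨆ n, ENNReal.ofReal (|f n x ω - f n y ω| ^ q) ∂ℙ
          ≤ ENNReal.ofReal (C * ‖x - y‖ ^ ((d : ℝ) + β))) :
    ∀ α : ℝ, 0 < α → α < β / q →
      ∃ g : ℕ → EuclideanSpace ℝ (Fin d) → Ω → ℝ, ∃ C' : Ω → ℝ,
        (∀ n, ∀ x ∈ closedBall (0 : EuclideanSpace ℝ (Fin d)) R,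
            ℙ {ω | g n x ω = f n x ω} = 1) ∧
        Measurable C' ∧ (∀ ω, 0 ≤ C' ω) ∧
        (∀ᵐ ω ∂ℙ, ∀ n, ∀ x ∈ closedBall (0 : EuclideanSpace ℝ (Fin d)) R,
            ∀ y ∈ closedBall (0 : EuclideanSpace ℝ (Fin d)) R,
              |g n x ω - g n y ω| ≤ C' ω * ‖x - y‖ ^ α) :=
  reinforced_kolmogorov_continuity_general ℙ d R hR f hmeas q β C hq hβ hC hbound
end

section
/- Planar Green kernel via compensated heat kernel: For all x, u ∈ ℝ² with x ≠ u, the function r ↦ (e^{−|x−u|²/(2r)} − e^{−1/(2r)})/(2πr) is Lebesgue integrable on (0,∞), and ∫_0^∞ (e^{−|x−u|²/(2r)} − e^{−1/(2r)})/(2πr) dr = (1/π)·ln(1/|x−u|). -/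
/-!
Substituting `r = s⁻¹`, which preserves the measure `dr / r`, turns the integral into Frullani's
integral `∫₀^∞ (e^{-a s} - e^{-b s}) / s ds = log (b / a)` with `a = |x - u|² / 2`, `b = 1 / 2`.
Its integrand is dominated by `|b - a| e^{-min(a, b) s}`, because `e^q - e^p ≤ (q - p) e^q`.
-/

open MeasureTheory Set Real Filter Topology

theorem exp_sub_exp_le_mul_exp (p q : ℝ) : exp q - exp p ≤ (q - p) * exp q := by
  have h := mul_le_mul_of_nonneg_right (add_one_le_exp (p - q)) (exp_pos q).le
  rw [add_mul, ← exp_add, sub_add_cancel] at h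
  linarith

theorem integrableOn_Ioi_inv_mul_exp_neg_mul_sub_of_le {a b : ℝ} (ha : 0 < a) (hab : a ≤ b) :
    IntegrableOn (fun x => x⁻¹ * (exp (-(a * x)) - exp (-(b * x)))) (Ioi 0) := by
  have hcont : ContinuousOn (fun x => x⁻¹ * (exp (-(a * x)) - exp (-(b * x)))) (Ioi 0) :=
    (continuousOn_inv₀.mono fun x hx => (mem_Ioi.1 hx).ne').mul (by fun_prop)
  refine Integrable.mono' ((exp_neg_integrableOn_Ioi 0 ha).const_mul (b - a))
    (hcont.aestronglyMeasurable measurableSet_Ioi) ?_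
  refine (ae_restrict_iff' measurableSet_Ioi).2 (ae_of_all _ fun x (hx : 0 < x) => ?_)
  have hmono : exp (-(b * x)) ≤ exp (-(a * x)) := by gcongr
  have hbound := exp_sub_exp_le_mul_exp (-(b * x)) (-(a * x))
  rw [norm_mul, norm_inv, norm_of_nonneg hx.le, norm_of_nonneg (sub_nonneg.2 hmono),
    inv_mul_le_iff₀ hx, neg_mul]
  linarith

theorem integrableOn_Ioi_inv_mul_exp_neg_mul_sub {a b : ℝ} (ha : 0 < a) (hb : 0 < b) :
    IntegrableOn (fun x => x⁻¹ * (exp (-(a * x)) - exp (-(b * x)))) (Ioi 0) := by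
  rcases le_total a b with hab | hba
  · exact integrableOn_Ioi_inv_mul_exp_neg_mul_sub_of_le ha hab
  · refine (integrableOn_Ioi_inv_mul_exp_neg_mul_sub_of_le hb hba).neg.congr_fun
      (fun x _ => ?_) measurableSet_Ioi
    simp only [Pi.neg_apply]
    ring

theorem integral_Ioi_inv_mul_exp_neg_mul_sub {a b : ℝ} (ha : 0 < a) (hb : 0 < b) :
    ∫ x in Ioi 0, x⁻¹ * (exp (-(a * x)) - exp (-(b * x))) = log (b / a) := by
  have hcont : Continuous fun x : ℝ => exp (-x) := by fun_prop
  have hL : Tendsto (fun x : ℝ => exp (-x)) (𝓝[>] 0) (𝓝 1) := by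
    simpa using (hcont.tendsto 0).mono_left nhdsWithin_le_nhds
  simpa using Frullani.integral_Ioi_eq (hcont.locallyIntegrable.locallyIntegrableOn _) ha hb
    hL tendsto_exp_neg_atTop_nhds_zero
    (integrableOn_Ioi_inv_mul_exp_neg_mul_sub ha hb)

section Inversion

variable {E : Type*} [NormedAddCommGroup E] [NormedSpace ℝ E]

private theorem inv_smul_comp_inv_eqOn (g : ℝ → E) :
    EqOn (fun r : ℝ => (|(-1 : ℝ)| * r ^ ((-1 : ℝ) - 1)) • ((r ^ (-1 : ℝ))⁻¹ • g (r ^ (-1 : ℝ))))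
      (fun r => r⁻¹ • g r⁻¹) (Ioi 0) := by
  intro r (hr : 0 < r)
  simp only [rpow_neg_one, inv_inv, smul_smul, abs_neg, abs_one, one_mul]
  rw [show (-1 : ℝ) - 1 = -(2 : ℕ) by norm_num, rpow_neg hr.le, rpow_natCast]
  congr 1
  field_simp

theorem integrableOn_Ioi_inv_smul_comp_inv_iff (g : ℝ → E) :
    IntegrableOn (fun r : ℝ => r⁻¹ • g r⁻¹) (Ioi 0) ↔
      IntegrableOn (fun s : ℝ => s⁻¹ • g s) (Ioi 0) := by
  rw [← integrableOn_Ioi_comp_rpow_iff (fun s : ℝ => s⁻¹ • g s) (by norm_num : (-1 : ℝ) ≠ 0)]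
  exact integrableOn_congr_fun (inv_smul_comp_inv_eqOn g).symm measurableSet_Ioi

theorem integral_Ioi_inv_smul_comp_inv (g : ℝ → E) :
    ∫ r in Ioi 0, r⁻¹ • g r⁻¹ = ∫ s in Ioi 0, s⁻¹ • g s := by
  rw [← integral_comp_rpow_Ioi (fun s : ℝ => s⁻¹ • g s) (by norm_num : (-1 : ℝ) ≠ 0)]
  exact (setIntegral_congr_fun measurableSet_Ioi (inv_smul_comp_inv_eqOn g)).symm

end Inversion

theorem inv_mul_exp_neg_mul_inv_sub_eq (a b : ℝ) :
    (fun r : ℝ => r⁻¹ * (exp (-(a * r⁻¹)) - exp (-(b * r⁻¹)))) =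
      fun r => (exp (-a / r) - exp (-b / r)) / r := by
  funext r
  rw [neg_div, neg_div, div_eq_mul_inv a, div_eq_mul_inv b, div_eq_inv_mul]

theorem integrableOn_Ioi_exp_neg_div_sub {a b : ℝ} (ha : 0 < a) (hb : 0 < b) :
    IntegrableOn (fun r => (exp (-a / r) - exp (-b / r)) / r) (Ioi 0) := by
  rw [← inv_mul_exp_neg_mul_inv_sub_eq]
  exact (integrableOn_Ioi_inv_smul_comp_inv_iff
    (fun s => exp (-(a * s)) - exp (-(b * s)))).2 (integrableOn_Ioi_inv_mul_exp_neg_mul_sub ha hb)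

theorem integral_Ioi_exp_neg_div_sub {a b : ℝ} (ha : 0 < a) (hb : 0 < b) :
    ∫ r in Ioi 0, (exp (-a / r) - exp (-b / r)) / r = log (b / a) := by
  rw [← inv_mul_exp_neg_mul_inv_sub_eq, ← integral_Ioi_inv_mul_exp_neg_mul_sub ha hb]
  exact integral_Ioi_inv_smul_comp_inv (fun s => exp (-(a * s)) - exp (-(b * s)))

/-- **Planar Green kernel via compensated heat kernel.**
For `x ≠ u` in `ℝ²`, the function
`r ↦ (exp(-|x-u|²/(2r)) - exp(-1/(2r))) / (2πr)` is Lebesgue integrable on `(0,∞)` and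
its integral equals `(1/π) * ln(1/|x-u|)`. -/
theorem compensated_heat_kernel_green
    (x u : EuclideanSpace ℝ (Fin 2)) (hxu : x ≠ u) :
    IntegrableOn
      (fun r : ℝ => (Real.exp (-‖x - u‖ ^ 2 / (2 * r)) - Real.exp (-1 / (2 * r)))
        / (2 * π * r)) (Ioi (0 : ℝ)) volume ∧
    ∫ r in Ioi (0 : ℝ),
        (Real.exp (-‖x - u‖ ^ 2 / (2 * r)) - Real.exp (-1 / (2 * r))) / (2 * π * r)
      = (1 / π) * Real.log (1 / ‖x - u‖) := by
  have hd : 0 < ‖x - u‖ := norm_pos_iff.2 (sub_ne_zero.2 hxu)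
  have hkernel : (fun r : ℝ => (exp (-‖x - u‖ ^ 2 / (2 * r)) - exp (-1 / (2 * r))) / (2 * π * r))
      = fun r => (2 * π)⁻¹ * ((exp (-(‖x - u‖ ^ 2 / 2) / r) - exp (-(1 / 2) / r)) / r) := by
    funext r
    have halve (c : ℝ) : -c / (2 * r) = -(c / 2) / r := by ring
    rw [halve, halve]
    ring
  have hratio : (1 / 2) / (‖x - u‖ ^ 2 / 2) = (1 / ‖x - u‖) ^ 2 := by
    field_simp
  rw [hkernel, integral_const_mul, integral_Ioi_exp_neg_div_sub (by positivity) one_half_pos,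
    hratio, log_pow]
  refine ⟨(integrableOn_Ioi_exp_neg_div_sub (by positivity) one_half_pos).const_mul _, ?_⟩
  field_simp
  ring
end

section
/- Convergence to the logarithmic potential for measures with integrable logarithm: Let μ be a finite Borel measure on ℝ² with compact support, and let x ∈ ℝ² be such that ∫_{ℝ²} |ln|x−u|| μ(du) < ∞. Then lim_{t→∞} ∫_{ℝ²} ( ∫_0^t (e^{−|x−u|²/(2r)} − e^{−1/(2r)})/(2πr) dr ) μ(du) = (1/π) ∫_{ℝ²} ln(1/|x−u|) μ(du). -/
/-!
Write `p_r(ρ) = e^{-ρ²/(2r)}/(2πr)`. Since `p_{s²v}(s) = p_v(1)/s²`, the substitution `r = s²v`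
turns `∫_0^t (p_r(s) - p_r(1)) dr` into `∫_t^{t/s²} p_v(1) dv`, and `v = tw` turns this into
`∫_1^{s⁻²} e^{-1/(2tw)} dw/(2πw)`. On this fixed interval the integrand is dominated by `1/(2πw)`
and tends to it as `t → ∞`: this gives the bound `|log s|/π`, uniform in `t`, and the limit
`(1/π) log(1/s)`. Dominated convergence in `u`, with dominating function `|log|x-u||/π`, concludes.
-/

open MeasureTheory Set Real Filter Topology intervalIntegral

/-- The transition density at time `r` of planar Brownian motion between points at distance `ρ`. -/
noncomputable def heatKernel (r ρ : ℝ) : ℝ := exp (-ρ ^ 2 / (2 * r)) / (2 * π * r)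

noncomputable def truncatedGreen (s t : ℝ) : ℝ :=
  ∫ r in Ioo 0 t, (heatKernel r s - heatKernel r 1)

section HeatKernel

variable {r s t w ρ : ℝ}

lemma heatKernel_nonneg (hr : 0 ≤ r) : 0 ≤ heatKernel r ρ := by
  unfold heatKernel; positivity

lemma heatKernel_le_inv (hr : 0 ≤ r) : heatKernel r ρ ≤ (2 * π * r)⁻¹ := by
  rw [heatKernel, div_eq_mul_inv]
  refine mul_le_of_le_one_left (by positivity) (exp_le_one_iff.2 ?_)
  exact div_nonpos_of_nonpos_of_nonneg (neg_nonpos.2 (sq_nonneg ρ)) (by positivity)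

lemma heatKernel_le_inv_pi_sq (hr : 0 < r) (hρ : ρ ≠ 0) : heatKernel r ρ ≤ (π * ρ ^ 2)⁻¹ := by
  have ha : 0 < ρ ^ 2 / (2 * r) := by positivity
  have hexp : exp (-(ρ ^ 2 / (2 * r))) ≤ (ρ ^ 2 / (2 * r))⁻¹ := by
    rw [exp_neg]
    exact inv_anti₀ ha ((lt_add_one _).le.trans (add_one_le_exp _))
  calc heatKernel r ρ = exp (-(ρ ^ 2 / (2 * r))) / (2 * π * r) := by rw [heatKernel, neg_div]
    _ ≤ (ρ ^ 2 / (2 * r))⁻¹ / (2 * π * r) := by gcongr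
    _ = (π * ρ ^ 2)⁻¹ := by field_simp

lemma heatKernel_sq_mul_mul (hs : s ≠ 0) :
    heatKernel (s ^ 2 * r) (s * ρ) = heatKernel r ρ / s ^ 2 := by
  rcases eq_or_ne r 0 with rfl | hr
  · simp [heatKernel]
  · simp only [heatKernel]
    field_simp

lemma heatKernel_zero_right : heatKernel r 0 = (2 * π)⁻¹ * r⁻¹ := by
  simp [heatKernel, mul_comm]

lemma integrableOn_heatKernel (hρ : ρ ≠ 0) (t : ℝ) :
    IntegrableOn (fun r => heatKernel r ρ) (Ioc 0 t) := by
  refine Measure.integrableOn_of_bounded (M := (π * ρ ^ 2)⁻¹) measure_Ioc_lt_top.ne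
    (by unfold heatKernel; fun_prop : Measurable _).aestronglyMeasurable ?_
  filter_upwards [ae_restrict_mem measurableSet_Ioc] with r hr
  rw [norm_of_nonneg (heatKernel_nonneg hr.1.le)]
  exact heatKernel_le_inv_pi_sq hr.1 hρ

lemma intervalIntegrable_heatKernel (hρ : ρ ≠ 0) (ht : 0 ≤ t) :
    IntervalIntegrable (fun r => heatKernel r ρ) volume 0 t :=
  (intervalIntegrable_iff_integrableOn_Ioc_of_le ht).2 (integrableOn_heatKernel hρ t)

lemma not_integrableOn_heatKernel_zero_right (ht : 0 < t) :
    ¬ IntegrableOn (fun r => heatKernel r 0) (Ioo 0 t) := by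
  simp only [heatKernel_zero_right]
  rw [IntegrableOn, integrable_const_mul_iff (by simp [pi_ne_zero]), ← IntegrableOn,
    ← intervalIntegrable_iff_integrableOn_Ioo_of_le ht.le, intervalIntegrable_inv_iff]
  simp [ht.ne, ht.le]

lemma integral_heatKernel_mul (hs : s ≠ 0) :
    ∫ r in 0..t, heatKernel r (s * ρ) = ∫ v in 0..t / s ^ 2, heatKernel v ρ := by
  have hs2 : s ^ 2 ≠ 0 := pow_ne_zero 2 hs
  have h : ∀ r, heatKernel r (s * ρ) = heatKernel (r / s ^ 2) ρ / s ^ 2 := fun r => by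
    rw [← heatKernel_sq_mul_mul hs, mul_div_cancel₀ r hs2]
  simp_rw [h]
  rw [intervalIntegral.integral_div, integral_comp_div (fun v => heatKernel v ρ) hs2, zero_div,
    smul_eq_mul, mul_div_cancel_left₀ _ hs2]

lemma tendsto_mul_heatKernel_mul (hw : 0 < w) :
    Tendsto (fun t => t * heatKernel (t * w) ρ) atTop (𝓝 ((2 * π)⁻¹ * w⁻¹)) := by
  have hexp : Tendsto (fun t : ℝ => exp (-ρ ^ 2 / (2 * w) * t⁻¹)) atTop (𝓝 1) := by
    have := tendsto_inv_atTop_zero.const_mul (-ρ ^ 2 / (2 * w))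
    rw [mul_zero] at this
    simpa [Function.comp_def] using (continuous_exp.tendsto 0).comp this
  refine (hexp.mul_const ((2 * π)⁻¹ * w⁻¹)).congr' ?_ |>.trans (by rw [one_mul])
  filter_upwards [eventually_ne_atTop 0] with t ht
  rw [heatKernel, show -ρ ^ 2 / (2 * (t * w)) = -ρ ^ 2 / (2 * w) * t⁻¹ by field_simp]
  field_simp

lemma norm_mul_heatKernel_mul_le (ht : 0 < t) (hw : 0 < w) :
    ‖t * heatKernel (t * w) ρ‖ ≤ (2 * π)⁻¹ * w⁻¹ := by
  rw [norm_of_nonneg (mul_nonneg ht.le (heatKernel_nonneg (by positivity)))]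
  calc t * heatKernel (t * w) ρ ≤ t * (2 * π * (t * w))⁻¹ :=
        mul_le_mul_of_nonneg_left (heatKernel_le_inv (by positivity)) ht.le
    _ = (2 * π)⁻¹ * w⁻¹ := by field_simp

end HeatKernel

lemma intervalIntegrable_const_mul_inv (c : ℝ) {a b : ℝ} (ha : 0 < a) (hb : 0 < b) :
    IntervalIntegrable (fun w => c * w⁻¹) volume a b :=
  (intervalIntegrable_inv_iff.2 (Or.inr (notMem_uIcc_of_lt ha hb))).const_mul c

section TruncatedGreen

variable {s t : ℝ}

lemma measurable_truncatedGreen (t : ℝ) : Measurable (fun s => truncatedGreen s t) :=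
  (StronglyMeasurable.integral_prod_right (f := fun s r => heatKernel r s - heatKernel r 1)
    (by unfold heatKernel; fun_prop : Measurable _).stronglyMeasurable).measurable

/-- For `s = 0` the integrand behaves like `1/(2πr)` at `0`, so the integral takes its junk value,
which agrees with `log (1 / 0) = 0`. -/
lemma truncatedGreen_zero_left (ht : 0 < t) : truncatedGreen 0 t = 0 := by
  refine integral_undef fun h => not_integrableOn_heatKernel_zero_right ht ?_
  exact (h.add ((integrableOn_heatKernel one_ne_zero t).mono_set Ioo_subset_Ioc_self)).congr
    (ae_of_all _ fun r => sub_add_cancel _ _)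

lemma truncatedGreen_eq_intervalIntegral (hs : 0 < s) (ht : 0 < t) :
    truncatedGreen s t = ∫ w in 1..(s ^ 2)⁻¹, t * heatKernel (t * w) 1 := by
  have hts : 0 ≤ t / s ^ 2 := by positivity
  calc truncatedGreen s t = ∫ r in 0..t, heatKernel r (s * 1) - heatKernel r 1 := by
        rw [truncatedGreen, integral_of_le ht.le, integral_Ioc_eq_integral_Ioo, mul_one]
    _ = ∫ v in t..t / s ^ 2, heatKernel v 1 := by
        rw [integral_sub (intervalIntegrable_heatKernel (by positivity) ht.le)
          (intervalIntegrable_heatKernel one_ne_zero ht.le), integral_heatKernel_mul hs.ne']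
        exact integral_interval_sub_left (intervalIntegrable_heatKernel one_ne_zero hts)
          (intervalIntegrable_heatKernel one_ne_zero ht.le)
    _ = ∫ w in 1..(s ^ 2)⁻¹, t * heatKernel (t * w) 1 := by
        rw [intervalIntegral.integral_const_mul,
          integral_comp_mul_left (fun v => heatKernel v 1) ht.ne', smul_eq_mul,
          mul_inv_cancel_left₀ ht.ne', mul_one, div_eq_mul_inv]

lemma integral_two_pi_inv_mul_inv (hs : 0 < s) :
    ∫ w in 1..(s ^ 2)⁻¹, (2 * π)⁻¹ * w⁻¹ = (1 / π) * log (1 / s) := by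
  rw [intervalIntegral.integral_const_mul, integral_inv_of_pos one_pos (by positivity), div_one]
  simp only [one_div, log_inv, log_pow]
  push_cast
  field_simp

lemma abs_truncatedGreen_le (hs : 0 ≤ s) (ht : 0 < t) :
    |truncatedGreen s t| ≤ π⁻¹ * |log s| := by
  rcases hs.eq_or_lt with rfl | hs
  · simp [truncatedGreen_zero_left ht]
  have hbound : ∀ w ∈ uIoc 1 (s ^ 2)⁻¹, ‖t * heatKernel (t * w) 1‖ ≤ (2 * π)⁻¹ * w⁻¹ :=
    fun w hw => norm_mul_heatKernel_mul_le ht ((lt_min one_pos (by positivity)).trans hw.1)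
  rw [truncatedGreen_eq_intervalIntegral hs ht, ← norm_eq_abs]
  refine (norm_integral_le_abs_of_norm_le (ae_restrict_of_forall_mem measurableSet_uIoc hbound)
    (intervalIntegrable_const_mul_inv _ one_pos (by positivity))).trans_eq ?_
  rw [integral_two_pi_inv_mul_inv hs]
  simp [abs_mul, abs_of_pos pi_pos]

lemma tendsto_truncatedGreen (hs : 0 ≤ s) :
    Tendsto (truncatedGreen s) atTop (𝓝 ((1 / π) * log (1 / s))) := by
  rcases hs.eq_or_lt with rfl | hs
  · simp only [div_zero, log_zero, mul_zero]
    exact tendsto_const_nhds.congr'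
      ((eventually_gt_atTop 0).mono fun t ht => (truncatedGreen_zero_left ht).symm)
  have hpos : ∀ w ∈ uIoc 1 (s ^ 2)⁻¹, 0 < w :=
    fun w hw => (lt_min one_pos (inv_pos.2 (pow_pos hs 2))).trans hw.1
  rw [← integral_two_pi_inv_mul_inv hs]
  refine (tendsto_integral_filter_of_dominated_convergence
    (F := fun t w => t * heatKernel (t * w) 1) (fun w => (2 * π)⁻¹ * w⁻¹) ?_ ?_
    (intervalIntegrable_const_mul_inv _ one_pos (by positivity)) ?_).congr' ?_
  · exact .of_forall fun t => (by unfold heatKernel; fun_prop : Measurable _).aestronglyMeasurable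
  · filter_upwards [eventually_gt_atTop 0] with t ht
    exact ae_of_all _ fun w hw => norm_mul_heatKernel_mul_le ht (hpos w hw)
  · exact ae_of_all _ fun w hw => tendsto_mul_heatKernel_mul (hpos w hw)
  · filter_upwards [eventually_gt_atTop 0] with t ht
    exact (truncatedGreen_eq_intervalIntegral hs ht).symm

end TruncatedGreen

theorem convergence_to_log_potential_general
    (μ : Measure (EuclideanSpace ℝ (Fin 2)))
    (x : EuclideanSpace ℝ (Fin 2))
    (hlog : Integrable (fun u => |Real.log ‖x - u‖|) μ) :
    Tendsto (fun t : ℝ =>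
        ∫ u, (∫ r in Ioo (0 : ℝ) t,
          (Real.exp (-‖x - u‖ ^ 2 / (2 * r)) - Real.exp (-1 / (2 * r)))
            / (2 * π * r)) ∂μ)
      atTop (nhds ((1 / π) * ∫ u, Real.log (1 / ‖x - u‖) ∂μ)) := by
  have hG : ∀ u t, (∫ r in Ioo (0 : ℝ) t,
      (Real.exp (-‖x - u‖ ^ 2 / (2 * r)) - Real.exp (-1 / (2 * r))) / (2 * π * r))
        = truncatedGreen ‖x - u‖ t := fun u t => by
    simp only [truncatedGreen, heatKernel, one_pow, sub_div]
  simp_rw [hG, ← MeasureTheory.integral_const_mul]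
  refine tendsto_integral_filter_of_dominated_convergence (fun u => π⁻¹ * |log ‖x - u‖|)
    (.of_forall fun t => ((measurable_truncatedGreen t).comp (by fun_prop)).aestronglyMeasurable)
    ?_ (hlog.const_mul _) (ae_of_all _ fun u => tendsto_truncatedGreen (norm_nonneg _))
  filter_upwards [eventually_gt_atTop 0] with t ht
  exact ae_of_all _ fun u => abs_truncatedGreen_le (norm_nonneg _) ht

/-- **Convergence to the logarithmic potential for measures with integrable logarithm.**
Let `μ` be a finite Borel measure on `ℝ²` with compact support and let `x ∈ ℝ²` satisfy
`∫ |ln|x-u|| μ(du) < ∞`. Then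
`∫ (∫_0^t (exp(-|x-u|²/(2r)) - exp(-1/(2r)))/(2πr) dr) μ(du)` converges, as `t → ∞`, to
`(1/π) ∫ ln(1/|x-u|) μ(du)`. -/
theorem convergence_to_log_potential
    (μ : Measure (EuclideanSpace ℝ (Fin 2))) [IsFiniteMeasure μ]
    (hsupp : ∃ K : Set (EuclideanSpace ℝ (Fin 2)), IsCompact K ∧ μ Kᶜ = 0)
    (x : EuclideanSpace ℝ (Fin 2))
    (hlog : Integrable (fun u => |Real.log ‖x - u‖|) μ) :
    Tendsto (fun t : ℝ =>
        ∫ u, (∫ r in Ioo (0 : ℝ) t,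
          (Real.exp (-‖x - u‖ ^ 2 / (2 * r)) - Real.exp (-1 / (2 * r)))
            / (2 * π * r)) ∂μ)
      atTop (nhds ((1 / π) * ∫ u, Real.log (1 / ‖x - u‖) ∂μ)) :=
  convergence_to_log_potential_general μ x hlog
end
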